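/- Let h > 0, σ > 0, ω ∈ ℝ with ω ≠ 0, and let ξ ∈ ℝ satisfy ω ξ > 0 and |ξ| < π/h. Then the denominator 2 + i(σ/ω)(1 − e^{iξh}) is nonzero and |ρ(σ, ξ, ω)| < 1. -/

import Mathlib

/-- The attenuation factor
`ρ(σ, ξ, ω) = (2 + i(σ/ω)(1 − e^{−iξh})) / (2 + i(σ/ω)(1 − e^{iξh}))`. -/
noncomputable def rho (σ : ℝ) (ξ : ℂ) (ω h : ℝ) : ℂ :=
  (2 + Complex.I * ((σ : ℂ) / (ω : ℂ)) * (1 - Complex.exp (-(Complex.I * ξ * (h : ℂ))))) /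
  (2 + Complex.I * ((σ : ℂ) / (ω : ℂ)) * (1 - Complex.exp (Complex.I * ξ * (h : ℂ))))

/-!
With `θ = ξh`, `s = σ/ω` and `w = i s (1 - e^{iθ})`, the denominator of `ρ` is `2 + w` and the
numerator is the conjugate of `2 - w`. Hence `|ρ| < 1` iff `|2 - w| < |2 + w|`, i.e.
`Re w = s sin θ > 0`; and this holds because `|θ| < π` makes `sin θ` have the sign of `ξ`, while
`s` has the sign of `ω`.
-/

open Complex ComplexConjugate

theorem norm_sub_lt_norm_add_iff_inner_pos {F : Type*} [NormedAddCommGroup F]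
    [InnerProductSpace ℝ F] (x y : F) : ‖x - y‖ < ‖x + y‖ ↔ 0 < inner ℝ x y := by
  rw [← sq_lt_sq₀ (norm_nonneg _) (norm_nonneg _), norm_sub_sq_real, norm_add_sq_real]
  constructor <;> intro h <;> linarith

theorem Real.mul_sin_pos_of_mul_pos {x y : ℝ} (hxy : 0 < x * y) (hy : |y| < Real.pi) :
    0 < x * Real.sin y := by
  obtain ⟨hy₁, hy₂⟩ := abs_lt.mp hy
  rcases pos_and_pos_or_neg_and_neg_of_mul_pos hxy with ⟨hx, hy⟩ | ⟨hx, hy⟩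
  · exact mul_pos hx (Real.sin_pos_of_pos_of_lt_pi hy hy₂)
  · exact mul_pos_of_neg_of_neg hx (Real.sin_neg_of_neg_of_neg_pi_lt hy hy₁)

theorem Complex.re_I_mul_ofReal_mul_one_sub_exp (s θ : ℝ) :
    (I * s * (1 - exp (θ * I))).re = s * Real.sin θ := by
  simp [exp_mul_I, sin_ofReal_re]

theorem Complex.conj_I_mul_ofReal_mul_one_sub_exp_neg (s θ : ℝ) :
    conj (I * s * (1 - exp (-(θ * I)))) = -(I * s * (1 - exp (θ * I))) := by
  rw [map_mul, map_mul, map_sub, map_one, ← exp_conj, map_neg, map_mul, conj_I, conj_ofReal,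
    conj_ofReal]
  ring_nf

/-- for real wavenumbers `ξ` with `ωξ > 0` and `|ξ| < π/h`, the attenuation
factor satisfies `|ρ(σ, ξ, ω)| < 1` (and its denominator is nonzero). -/
theorem stmt7 (h : ℝ) (hh : 0 < h) (σ : ℝ) (hσ : 0 < σ) (ω : ℝ) (hω : ω ≠ 0)
    (ξ : ℝ) (hωξ : 0 < ω * ξ) (hξ : |ξ| < Real.pi / h) :
    (2 + Complex.I * ((σ : ℂ) / (ω : ℂ)) *
        (1 - Complex.exp (Complex.I * (ξ : ℂ) * (h : ℂ))) ≠ 0) ∧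
    ‖rho σ (ξ : ℂ) ω h‖ < 1 := by
  have hexp : I * (ξ : ℂ) * h = ((ξ * h : ℝ) : ℂ) * I := by push_cast; ring
  have hs : (σ : ℂ) / ω = ((σ / ω : ℝ) : ℂ) := by push_cast; rfl
  set w := I * ((σ / ω : ℝ) : ℂ) * (1 - exp ((ξ * h : ℝ) * I)) with hw
  have hw_re : 0 < w.re := by
    rw [hw, re_I_mul_ofReal_mul_one_sub_exp]
    refine Real.mul_sin_pos_of_mul_pos ?_ ?_
    · have : σ / ω * (ξ * h) = σ * h * (ω * ξ) / ω ^ 2 := by field_simp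
      rw [this]; positivity
    · rw [abs_mul, abs_of_pos hh]; exact (lt_div_iff₀ hh).mp hξ
  have hD : (2 : ℂ) + w ≠ 0 := fun h0 => by
    have := congrArg re h0
    simp only [add_re, re_ofNat, zero_re] at this
    linarith
  have hN : ‖(2 : ℂ) - w‖ < ‖(2 : ℂ) + w‖ := by
    rw [norm_sub_lt_norm_add_iff_inner_pos, Complex.inner]
    simpa using hw_re
  refine ⟨by rwa [hexp, hs], ?_⟩
  rw [rho, hexp, hs, ← norm_conj, map_div₀, norm_div, ← hw, map_add, map_ofNat,
    conj_I_mul_ofReal_mul_one_sub_exp_neg, ← sub_eq_add_neg, norm_conj]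
  exact (div_lt_one (norm_pos_iff.mpr hD)).mpr hN
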